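/- arXiv:1905.11028 — 2 statements merged into one kernel-verified Lean document; each statement's English description precedes it below -/
import Mathlib

section
/- Suppose the distribution P on X × {-1,1} has noise exponent α ∈ (0,∞), i.e. P_X({x : |2η(x)-1| ≤ h}) ≤ c_α h^α for all h ≥ 0 and some c_α > 0. Then there exists a constant V > 0 (depending on α and c_α) such that for every measurable g : X → {-1,1}, E[(L∘g - L∘f*)²] ≤ V (E[L∘g - L∘f*])^{α/(1+α)}, where L is the classification loss and f* the Bayes classifier. -/
open MeasureTheory Filter Topology Set

/-!
Write `φ = |2η - 1|` and `D = |g - f*|`. Pointwise, the excess conditional risk of predicting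
`g` instead of the Bayes label is `φ D / 2`, so the excess risk is `E = (1/2) ∫ φ D`. Splitting
`∫ D` according to whether `φ ≤ t` gives `(1/2) ∫ D ≤ P_X {φ ≤ t} + E / t ≤ c_α t^α + E / t`
for every `t > 0`, and the choice `t = E^(1/(1+α))` balances the two terms.
-/

/-- The conditional risk of predicting the label `y` when `P(Y = 1 | X = x) = p`. -/
noncomputable def condRisk (p y : ℝ) : ℝ := if y = 1 then 1 - p else p

noncomputable def bayesLabel (p : ℝ) : ℝ := if 0 ≤ 2 * p - 1 then 1 else -1

lemma condRisk_mem_Icc {p : ℝ} (hp : p ∈ Icc 0 1) (y : ℝ) : condRisk p y ∈ Icc 0 1 := by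
  obtain ⟨hp0, hp1⟩ := hp
  unfold condRisk
  split_ifs <;> constructor <;> linarith

lemma condRisk_sub_condRisk_bayesLabel (p : ℝ) {y : ℝ} (hy : y = 1 ∨ y = -1) :
    condRisk p y - condRisk p (bayesLabel p) = |2 * p - 1| * |y - bayesLabel p| / 2 := by
  unfold condRisk bayesLabel
  rcases le_or_gt 0 (2 * p - 1) with hp | hp
  · rcases hy with rfl | rfl
    · norm_num [hp]
    · norm_num [hp, abs_of_nonneg hp]; ring
  · rcases hy with rfl | rfl
    · norm_num [hp.not_ge, abs_of_neg hp]; ring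
    · norm_num [hp.not_ge]

lemma abs_sub_bayesLabel_le_two {y : ℝ} (hy : y = 1 ∨ y = -1) (p : ℝ) :
    |y - bayesLabel p| ≤ 2 := by
  unfold bayesLabel
  split_ifs <;> rcases hy with rfl | rfl <;> norm_num

lemma measurable_bayesLabel : Measurable bayesLabel :=
  Measurable.ite (measurableSet_le measurable_const (by fun_prop)) measurable_const
    measurable_const

section Risk

variable {X : Type*} [MeasurableSpace X] {μ : Measure X} {η g : X → ℝ}

lemma Measurable.condRisk (hη : Measurable η) (hg : Measurable g) :
    Measurable fun x => condRisk (η x) (g x) :=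
  Measurable.ite (hg (measurableSet_singleton 1)) (measurable_const.sub hη) hη

lemma integrable_condRisk [IsFiniteMeasure μ] (hη : Measurable η)
    (hη01 : ∀ x, η x ∈ Icc 0 1) (hg : Measurable g) :
    Integrable (fun x => condRisk (η x) (g x)) μ :=
  .of_mem_Icc 0 1 (hη.condRisk hg).aemeasurable
    (ae_of_all _ fun x => condRisk_mem_Icc (hη01 x) _)

lemma integral_condRisk_sub_bayesLabel [IsFiniteMeasure μ] (hη : Measurable η)
    (hη01 : ∀ x, η x ∈ Icc 0 1) (hg : Measurable g) (hg1 : ∀ x, g x = 1 ∨ g x = -1) :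
    ∫ x, condRisk (η x) (g x) ∂μ - ∫ x, condRisk (η x) (bayesLabel (η x)) ∂μ
      = (1 / 2) * ∫ x, |2 * η x - 1| * |g x - bayesLabel (η x)| ∂μ := by
  rw [← integral_sub (integrable_condRisk hη hη01 hg)
    (integrable_condRisk (g := fun x => bayesLabel (η x)) hη hη01
      (measurable_bayesLabel.comp hη)), ← integral_const_mul]
  refine integral_congr_ae (ae_of_all _ fun x => ?_)
  simp only [condRisk_sub_condRisk_bayesLabel _ (hg1 x)]
  ring

end Risk

lemma integral_le_mul_measureReal_sublevel_add {X : Type*} [MeasurableSpace X] {μ : Measure X}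
    [IsFiniteMeasure μ] {φ D : X → ℝ} {M t : ℝ} (hφ : Measurable φ) (hD : Integrable D μ)
    (hφD : Integrable (fun x => φ x * D x) μ) (hφ0 : ∀ x, 0 ≤ φ x) (hD0 : ∀ x, 0 ≤ D x)
    (hDM : ∀ x, D x ≤ M) (ht : 0 < t) :
    ∫ x, D x ∂μ ≤ M * μ.real {x | φ x ≤ t} + (∫ x, φ x * D x ∂μ) / t := by
  set S := {x | φ x ≤ t}
  have hS : MeasurableSet S := measurableSet_le hφ measurable_const
  have hpointwise x : D x ≤ S.indicator (fun _ => M) x + φ x * D x / t := by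
    by_cases hx : x ∈ S
    · rw [indicator_of_mem hx]
      linarith [hDM x, div_nonneg (mul_nonneg (hφ0 x) (hD0 x)) ht.le]
    · rw [indicator_of_notMem hx, zero_add, le_div_iff₀ ht, mul_comm]
      exact mul_le_mul_of_nonneg_right (not_le.mp hx).le (hD0 x)
  have hind : Integrable (S.indicator fun _ => M) μ := (integrable_const M).indicator hS
  calc ∫ x, D x ∂μ ≤ ∫ x, (S.indicator (fun _ => M) x + φ x * D x / t) ∂μ :=
        integral_mono hD (hind.add (hφD.div_const t)) hpointwise
    _ = M * μ.real S + (∫ x, φ x * D x ∂μ) / t := by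
        rw [integral_add hind (hφD.div_const t), integral_indicator_const M hS, integral_div,
          smul_eq_mul, mul_comm]

lemma le_mul_rpow_of_forall_le_mul_rpow_add_div {A c E α : ℝ} (hα : 0 < α) (hE : 0 ≤ E)
    (h : ∀ t, 0 < t → A ≤ c * t ^ α + E / t) : A ≤ (1 + c) * E ^ (α / (1 + α)) := by
  rcases hE.eq_or_lt with rfl | hE
  · have hlim : Tendsto (fun t : ℝ => c * t ^ α + 0 / t) (𝓝[>] 0) (𝓝 0) := by
      simpa using ((tendsto_nhdsWithin_of_tendsto_nhds tendsto_id).rpow_const_nhds_zero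
        hα).const_mul c
    rw [Real.zero_rpow (div_pos hα (by linarith)).ne', mul_zero]
    exact ge_of_tendsto hlim (eventually_nhdsWithin_of_forall fun t ht => h t ht)
  · have hpow : (E ^ (1 / (1 + α))) ^ α = E ^ (α / (1 + α)) := by
      rw [← Real.rpow_mul hE.le, one_div_mul_eq_div]
    have hdiv : E / E ^ (1 / (1 + α)) = E ^ (α / (1 + α)) := by
      have hexp : 1 - 1 / (1 + α) = α / (1 + α) := by field_simp; ring
      rw [← Real.rpow_one_sub' hE.le (by rw [hexp]; positivity), hexp]
    have := h _ (Real.rpow_pos_of_pos hE (1 / (1 + α)))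
    rw [hpow, hdiv] at this
    linarith

/-- Variance bound under Tsybakov's noise condition.  If `P` has noise exponent `α`, i.e.
`P_X {x : |2η x - 1| ≤ h} ≤ c_α h^α` for all `h ≥ 0`, then there is `V > 0` such that for
every `{-1,1}`-valued classifier `g`,
`E[(L∘g - L∘f*)²] ≤ V * (E[L∘g - L∘f*])^(α/(1+α))`.
Here, using the classification loss identities, `E[(L∘g - L∘f*)²] = (1/2)∫|g - f*| dP_X`
and `E[L∘g - L∘f*] = R(g) - R(f*)` is the excess classification risk. -/
theorem variance_bound {X : Type*} [MeasurableSpace X]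
    (μ : Measure X) [IsProbabilityMeasure μ]
    (η : X → ℝ) (hη : Measurable η) (hη01 : ∀ x, η x ∈ Set.Icc (0:ℝ) 1)
    (fstar : X → ℝ) (hfstar : fstar = fun x => if 0 ≤ 2 * η x - 1 then 1 else -1)
    (α : ℝ) (hα : 0 < α) (cα : ℝ) (hcα : 0 < cα)
    (hnoise : ∀ h : ℝ, 0 ≤ h →
      (μ {x | |2 * η x - 1| ≤ h}).toReal ≤ cα * h ^ α) :
    ∃ V : ℝ, 0 < V ∧ ∀ g : X → ℝ, Measurable g → (∀ x, g x = 1 ∨ g x = -1) →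
      (1 / 2) * ∫ x, |g x - fstar x| ∂μ
        ≤ V * ((∫ x, (if g x = 1 then 1 - η x else η x) ∂μ)
              - (∫ x, (if fstar x = 1 then 1 - η x else η x) ∂μ)) ^ (α / (1 + α)) := by
  subst hfstar
  refine ⟨1 + cα, by linarith, fun g hg hg1 => ?_⟩
  change (1 / 2) * ∫ x, |g x - bayesLabel (η x)| ∂μ ≤ (1 + cα) *
    (∫ x, condRisk (η x) (g x) ∂μ - ∫ x, condRisk (η x) (bayesLabel (η x)) ∂μ) ^ (α / (1 + α))
  rw [integral_condRisk_sub_bayesLabel hη hη01 hg hg1]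
  have hD : Measurable fun x => |g x - bayesLabel (η x)| :=
    (hg.sub (measurable_bayesLabel.comp hη)).abs
  have hφ : Measurable fun x => |2 * η x - 1| := by fun_prop
  have hDIcc x : |g x - bayesLabel (η x)| ∈ Icc 0 2 :=
    ⟨abs_nonneg _, abs_sub_bayesLabel_le_two (hg1 x) _⟩
  have hφDIcc x : |2 * η x - 1| * |g x - bayesLabel (η x)| ∈ Icc 0 2 := by
    have : |2 * η x - 1| ≤ 1 := abs_le.mpr ⟨by linarith [(hη01 x).1], by linarith [(hη01 x).2]⟩
    exact ⟨by positivity,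
      (mul_le_mul this (hDIcc x).2 (hDIcc x).1 zero_le_one).trans_eq (one_mul 2)⟩
  refine le_mul_rpow_of_forall_le_mul_rpow_add_div hα
    (mul_nonneg (by norm_num) (integral_nonneg fun x => (hφDIcc x).1)) fun t ht => ?_
  have hsplit := integral_le_mul_measureReal_sublevel_add (μ := μ) hφ
    (.of_mem_Icc 0 2 hD.aemeasurable (ae_of_all _ hDIcc))
    (.of_mem_Icc 0 2 (hφ.mul hD).aemeasurable (ae_of_all _ hφDIcc))
    (fun x => abs_nonneg _) (fun x => (hDIcc x).1) (fun x => (hDIcc x).2) ht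
  have hnoise_t : μ.real {x | |2 * η x - 1| ≤ t} ≤ cα * t ^ α := hnoise t ht.le
  rw [mul_div_assoc]
  linarith
end

section
/- Let P be a distribution on X × {-1,1} whose distance to the decision boundary Δ controls the noise with exponent γ (i.e., |2η(x)-1| ≤ c Δ(x)^γ P_X-a.e.) and which has noise exponent α (i.e., P_X(|2η-1| ≤ h) ≤ c_α h^α for all h ≥ 0). Then P has margin-noise exponent β = γ(α+1): there is a constant c_β > 0 such that ∫_{Δ(x) ≤ h} |2η(x)-1| dP_X(x) ≤ c_β h^{γ(α+1)} for all h ≥ 0. -/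
/-!
Where `Δ x ≤ h`, the control hypothesis gives `|2η x - 1| ≤ c h^γ =: C`, so the integral of
`|2η - 1|` over `{Δ ≤ h}` is at most `C · P_X(|2η - 1| ≤ C) ≤ C · c_α C^α = c_α c^(α+1) h^(γ(α+1))`.
-/

open MeasureTheory Metric

section

variable {X : Type*} [MeasurableSpace X]

theorem setIntegral_le_mul_measureReal_abs_le (μ : Measure X) [IsFiniteMeasure μ]
    {f : X → ℝ} {A : Set X} {C : ℝ} (hA : ∀ᵐ x ∂μ, x ∈ A → |f x| ≤ C) :
    ∫ x in A, f x ∂μ ≤ C * μ.real {x | |f x| ≤ C} := by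
  have hint : ∫ x in A, f x ∂μ ≤ C * μ.real A :=
    (Real.le_norm_self _).trans
      (norm_setIntegral_le_of_norm_le_const_ae' (measure_lt_top μ A) hA)
  rcases le_or_gt 0 C with hC | hC
  · exact hint.trans <| mul_le_mul_of_nonneg_left
      (ENNReal.toReal_mono (measure_ne_top μ _) (measure_mono_ae hA)) hC
  · have hempty : {x | |f x| ≤ C} = ∅ :=
      Set.eq_empty_of_forall_notMem fun x hx => (abs_nonneg (f x)).not_gt (hx.trans_lt hC)
    rw [hempty, measureReal_empty, mul_zero]
    exact hint.trans (mul_nonpos_of_nonpos_of_nonneg hC.le measureReal_nonneg)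

end

section

variable {X : Type*} [MetricSpace X]

noncomputable def boundaryDist (η : X → ℝ) (x : X) : ℝ :=
  if η x < 1 / 2 then infDist x {z | 1 / 2 < η z}
  else if 1 / 2 < η x then infDist x {z | η z < 1 / 2} else 0

theorem boundaryDist_nonneg (η : X → ℝ) (x : X) : 0 ≤ boundaryDist η x := by
  unfold boundaryDist
  split_ifs <;> first | exact infDist_nonneg | exact le_rfl

end

theorem margin_noise_exponent_general {X : Type*} [MetricSpace X] [MeasurableSpace X]
    (μ : Measure X) [IsProbabilityMeasure μ]
    (η : X → ℝ)
    (Δ : X → ℝ)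
    (hΔ : Δ = fun x => if η x < 1 / 2 then infDist x {z | 1 / 2 < η z}
      else if 1 / 2 < η x then infDist x {z | η z < 1 / 2} else 0)
    (γ : ℝ) (hγ : 0 ≤ γ) (c : ℝ) (hc : 0 < c)
    (hcontrol : ∀ᵐ x ∂μ, |2 * η x - 1| ≤ c * Δ x ^ γ)
    (α : ℝ) (hα : 0 < α) (cα : ℝ) (hcα : 0 < cα)
    (hnoise : ∀ h : ℝ, 0 ≤ h → (μ {x | |2 * η x - 1| ≤ h}).toReal ≤ cα * h ^ α) :
    ∃ cβ : ℝ, 0 < cβ ∧ ∀ h : ℝ, 0 ≤ h →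
      ∫ x in {x | Δ x ≤ h}, |2 * η x - 1| ∂μ ≤ cβ * h ^ (γ * (α + 1)) := by
  refine ⟨cα * c ^ (α + 1), by positivity, fun h hh => ?_⟩
  set C := c * h ^ γ
  have hC : 0 ≤ C := by positivity
  have hnear : ∀ᵐ x ∂μ, x ∈ {x | Δ x ≤ h} → |(|2 * η x - 1|)| ≤ C := by
    filter_upwards [hcontrol] with x hx hxh
    have hΔx : 0 ≤ Δ x := hΔ ▸ boundaryDist_nonneg η x
    rw [abs_abs]
    exact hx.trans (mul_le_mul_of_nonneg_left (Real.rpow_le_rpow hΔx hxh hγ) hc.le)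
  calc ∫ x in {x | Δ x ≤ h}, |2 * η x - 1| ∂μ ≤ C * μ.real {x | |(|2 * η x - 1|)| ≤ C} :=
        setIntegral_le_mul_measureReal_abs_le μ hnear
    _ ≤ C * (cα * C ^ α) := by
        simp only [abs_abs]
        exact mul_le_mul_of_nonneg_left (hnoise C hC) hC
    _ = cα * C ^ (α + 1) := by rw [Real.rpow_add_one' hC (by positivity)]; ring
    _ = cα * c ^ (α + 1) * h ^ (γ * (α + 1)) := by
        rw [Real.mul_rpow hc.le (by positivity), ← Real.rpow_mul hh]; ring

/-- If the distance to the decision boundary controls the noise with exponent `γ`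
(`|2η - 1| ≤ c Δ^γ` a.e.) and `P` has noise exponent `α`
(`P_X(|2η - 1| ≤ h) ≤ c_α h^α` for all `h ≥ 0`), then `P` has margin-noise exponent
`β = γ(α+1)`: there is `c_β > 0` with `∫_{Δ ≤ h} |2η - 1| dP_X ≤ c_β h^(γ(α+1))` for all
`h ≥ 0`. -/
theorem margin_noise_exponent {X : Type*} [MetricSpace X] [MeasurableSpace X]
    (μ : Measure X) [IsProbabilityMeasure μ]
    (η : X → ℝ) (hη : Measurable η)
    (Δ : X → ℝ)
    (hΔ : Δ = fun x => if η x < 1 / 2 then infDist x {z | 1 / 2 < η z}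
      else if 1 / 2 < η x then infDist x {z | η z < 1 / 2} else 0)
    (γ : ℝ) (hγ : 0 ≤ γ) (c : ℝ) (hc : 0 < c)
    (hcontrol : ∀ᵐ x ∂μ, |2 * η x - 1| ≤ c * Δ x ^ γ)
    (α : ℝ) (hα : 0 < α) (cα : ℝ) (hcα : 0 < cα)
    (hnoise : ∀ h : ℝ, 0 ≤ h → (μ {x | |2 * η x - 1| ≤ h}).toReal ≤ cα * h ^ α) :
    ∃ cβ : ℝ, 0 < cβ ∧ ∀ h : ℝ, 0 ≤ h →
      ∫ x in {x | Δ x ≤ h}, |2 * η x - 1| ∂μ ≤ cβ * h ^ (γ * (α + 1)) :=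
  margin_noise_exponent_general μ η Δ hΔ γ hγ c hc hcontrol α hα cα hcα hnoise
end
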